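/- For all vectors z_1,…,z_8 ∈ ℂ^4 the following polynomial identity holds: A·⟨1567⟩² − B·⟨1567⟩·⟨1568⟩ + C·⟨1568⟩² = −⟨5678⟩·det[(156*34), z_2, z_1, (78*156)], where (156*34) and (78*156) are the shuffle vectors associated with the tuples ((z_1,z_5,z_6),(z_3,z_4)) and ((z_7,z_8),(z_1,z_5,z_6)) respectively. -/

import Mathlib

/-!
Put `w := ⟨1567⟩ z₈ − ⟨1568⟩ z₇`. Since `Y_{ij}` is bilinear in `(z_i, z_j)`, the left-hand side
is `Y(w, w)`. Cramer's rule for the five vectors `z₁, z₅, z₆, z₇, z₈` of `ℂ⁴` gives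
`w = −(78*156)`, and the three-term Plücker relation `⟨56wy⟩ = −⟨5678⟩⟨156y⟩` turns the shuffle
`(56w*43)` into `⟨5678⟩·(156*34)`, so that `Y(w, w) = ⟨12w(56w*43)⟩` is the right-hand side.
-/

noncomputable section

/-- `⟨u₁ u₂ u₃ u₄⟩ = det[u₁ u₂ u₃ u₄]`: the determinant of the `4 × 4` complex matrix with
columns `u₁, u₂, u₃, u₄` in the listed order. -/
def det4 (a b c d : Fin 4 → ℂ) : ℂ :=
  Matrix.det (Matrix.of fun i j => ![a, b, c, d] j i)

/-- The chain polynomial `⟨X * Y * U⟩` for blocks `X = (x₁,x₂,x₃)`, `Y = (y₁,y₂)`,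
`U = (u₁,u₂,u₃)` of sizes `(3,2,3)`:
`Σ_{w ∈ S₂¹} sign(w)·det[x₁ x₂ x₃ y_{w(2)}]·det[y_{w(1)} u₁ u₂ u₃]`. -/
def chain323 (x1 x2 x3 y1 y2 u1 u2 u3 : Fin 4 → ℂ) : ℂ :=
  det4 x1 x2 x3 y2 * det4 y1 u1 u2 u3 - det4 x1 x2 x3 y1 * det4 y2 u1 u2 u3

/-- The shuffle vector `(X * Y) ∈ ℂ⁴` for tuples `X = (x₁,x₂,x₃)`, `Y = (y₁,y₂)`
(`p + q = 5`): `Σ_j (−1)^{j−1}·det[x₁ x₂ x₃ y₁ ⋯ ŷ_j ⋯ y₂]·y_j`. -/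
def shuf32 (x1 x2 x3 y1 y2 : Fin 4 → ℂ) : Fin 4 → ℂ :=
  det4 x1 x2 x3 y2 • y1 - det4 x1 x2 x3 y1 • y2

/-- The shuffle vector `(X * Y) ∈ ℂ⁴` for tuples `X = (x₁,x₂)`, `Y = (y₁,y₂,y₃)`
(`p + q = 5`): `Σ_j (−1)^{j−1}·det[x₁ x₂ y₁ ⋯ ŷ_j ⋯ y₃]·y_j`. -/
def shuf23 (x1 x2 y1 y2 y3 : Fin 4 → ℂ) : Fin 4 → ℂ :=
  det4 x1 x2 y2 y3 • y1 - det4 x1 x2 y1 y3 • y2 + det4 x1 x2 y1 y2 • y3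

/-- `A := Y₈₈` where `Y_{ij} := ⟨12i * 43 * 56j⟩`. -/
def Aco (z1 z2 z3 z4 z5 z6 z7 z8 : Fin 4 → ℂ) : ℂ :=
  chain323 z1 z2 z8 z4 z3 z5 z6 z8

/-- `B := Y₇₈ + Y₈₇` where `Y_{ij} := ⟨12i * 43 * 56j⟩`. -/
def Bco (z1 z2 z3 z4 z5 z6 z7 z8 : Fin 4 → ℂ) : ℂ :=
  chain323 z1 z2 z7 z4 z3 z5 z6 z8 + chain323 z1 z2 z8 z4 z3 z5 z6 z7

/-- `C := Y₇₇` where `Y_{ij} := ⟨12i * 43 * 56j⟩`. -/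
def Cco (z1 z2 z3 z4 z5 z6 z7 z8 : Fin 4 → ℂ) : ℂ :=
  chain323 z1 z2 z7 z4 z3 z5 z6 z7

lemma det4_eq (a b c d : Fin 4 → ℂ) : det4 a b c d =
    a 0 * (b 1 * (c 2 * d 3 - c 3 * d 2) - b 2 * (c 1 * d 3 - c 3 * d 1)
      + b 3 * (c 1 * d 2 - c 2 * d 1))
    - a 1 * (b 0 * (c 2 * d 3 - c 3 * d 2) - b 2 * (c 0 * d 3 - c 3 * d 0)
      + b 3 * (c 0 * d 2 - c 2 * d 0))
    + a 2 * (b 0 * (c 1 * d 3 - c 3 * d 1) - b 1 * (c 0 * d 3 - c 3 * d 0)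
      + b 3 * (c 0 * d 1 - c 1 * d 0))
    - a 3 * (b 0 * (c 1 * d 2 - c 2 * d 1) - b 1 * (c 0 * d 2 - c 2 * d 0)
      + b 2 * (c 0 * d 1 - c 1 * d 0)) := by
  simp [det4, Matrix.det_succ_row_zero, Fin.sum_univ_succ, Fin.succAbove]
  ring

section Det4

variable (p q : ℂ) (a b c d u v : Fin 4 → ℂ)

lemma det4_smul_sub_smul_third :
    det4 a b (p • u - q • v) d = p * det4 a b u d - q * det4 a b v d := by
  simp only [det4_eq, Pi.sub_apply, Pi.smul_apply, smul_eq_mul]; ring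

lemma det4_smul_sub_smul_fourth :
    det4 a b c (p • u - q • v) = p * det4 a b c u - q * det4 a b c v := by
  simp only [det4_eq, Pi.sub_apply, Pi.smul_apply, smul_eq_mul]; ring

lemma det4_neg_third_smul_fourth :
    det4 a b (-c) (p • d) = -(p * det4 d b a c) := by
  simp only [det4_eq, Pi.neg_apply, Pi.smul_apply, smul_eq_mul]; ring

lemma det4_rotate : det4 a b c d = -det4 b c d a := by
  simp only [det4_eq]; ring

end Det4

/-- Cramer's rule: five vectors of `ℂ⁴` are linearly dependent with cofactors as coefficients. -/
lemma smul_sub_smul_eq_neg_shuf23 (a c d e f : Fin 4 → ℂ) :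
    det4 a c d e • f - det4 a c d f • e = -shuf23 e f a c d := by
  funext i
  fin_cases i <;>
    simp only [shuf23, det4_eq, Fin.zero_eta, Fin.mk_one, Fin.reduceFinMk, Pi.add_apply,
      Pi.sub_apply, Pi.neg_apply, Pi.smul_apply, smul_eq_mul] <;> ring

lemma det4_plucker (a c d e f y : Fin 4 → ℂ) :
    det4 a c d e * det4 c d f y - det4 a c d f * det4 c d e y = -(det4 c d e f * det4 a c d y) := by
  simp only [det4_eq]; ring

lemma shuf32_smul_sub_smul (a c d e f y₁ y₂ : Fin 4 → ℂ) :
    shuf32 c d (det4 a c d e • f - det4 a c d f • e) y₁ y₂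
      = det4 c d e f • shuf32 a c d y₂ y₁ := by
  simp only [shuf32, det4_smul_sub_smul_third, det4_plucker, smul_sub, smul_smul, neg_smul,
    sub_neg_eq_add]
  abel

lemma chain323_eq_det4_shuf32 (x1 x2 x3 y1 y2 u1 u2 u3 : Fin 4 → ℂ) :
    chain323 x1 x2 x3 y1 y2 u1 u2 u3 = det4 x1 x2 x3 (shuf32 u1 u2 u3 y1 y2) := by
  rw [chain323, shuf32, det4_smul_sub_smul_fourth, det4_rotate y1, det4_rotate y2]
  ring

lemma chain323_smul_sub_smul (p q : ℂ) (x1 x2 y1 y2 u1 u2 a b : Fin 4 → ℂ) :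
    chain323 x1 x2 (p • b - q • a) y1 y2 u1 u2 (p • b - q • a)
      = chain323 x1 x2 b y1 y2 u1 u2 b * p ^ 2
        - (chain323 x1 x2 a y1 y2 u1 u2 b + chain323 x1 x2 b y1 y2 u1 u2 a) * p * q
        + chain323 x1 x2 a y1 y2 u1 u2 a * q ^ 2 := by
  simp only [chain323, det4_smul_sub_smul_third, det4_smul_sub_smul_fourth]
  ring

/-- For all vectors `z₁, …, z₈ ∈ ℂ⁴`:
`A·⟨1567⟩² − B·⟨1567⟩·⟨1568⟩ + C·⟨1568⟩² = −⟨5678⟩·det[(156*34), z₂, z₁, (78*156)]`. -/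
theorem identity_quadratic_in_1567_1568 (z1 z2 z3 z4 z5 z6 z7 z8 : Fin 4 → ℂ) :
    Aco z1 z2 z3 z4 z5 z6 z7 z8 * det4 z1 z5 z6 z7 ^ 2
      - Bco z1 z2 z3 z4 z5 z6 z7 z8 * det4 z1 z5 z6 z7 * det4 z1 z5 z6 z8
      + Cco z1 z2 z3 z4 z5 z6 z7 z8 * det4 z1 z5 z6 z8 ^ 2
    = -(det4 z5 z6 z7 z8 * det4 (shuf32 z1 z5 z6 z3 z4) z2 z1 (shuf23 z7 z8 z1 z5 z6)) := by
  set w := det4 z1 z5 z6 z7 • z8 - det4 z1 z5 z6 z8 • z7 with hw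
  calc _ = chain323 z1 z2 w z4 z3 z5 z6 w := (chain323_smul_sub_smul ..).symm
    _ = det4 z1 z2 w (shuf32 z5 z6 w z4 z3) := chain323_eq_det4_shuf32 ..
    _ = det4 z1 z2 w (det4 z5 z6 z7 z8 • shuf32 z1 z5 z6 z3 z4) := by
      rw [shuf32_smul_sub_smul]
    _ = _ := by
      rw [hw, smul_sub_smul_eq_neg_shuf23, det4_neg_third_smul_fourth]

end
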